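/- arXiv:1302.2774 — 7 statements merged into one kernel-verified Lean document; each statement's English description precedes it below -/
import Mathlib

section
/- Let E be a closed symmetric monoidal category and T₁, T₂ : E ⥤ E functors equipped with tensorial strengths σ₁, σ₂, with corresponding E-enrichments φ₁, φ₂ under the bijection between strengths and enrichments. A natural transformation Ψ : T₁ ⟶ T₂ is strong, i.e. Ψ_{X⊗A} ∘ (σ₁)_{X,A} = (σ₂)_{X,A} ∘ (id_X ⊗ Ψ_A) for all objects X, A, if and only if it is E-natural, i.e. [id_{T₁(A)}, Ψ_B] ∘ (φ₁)_{A,B} = [Ψ_A, id_{T₂(B)}] ∘ (φ₂)_{A,B} : [A,B] ⟶ [T₁(A), T₂(B)] for all objects A, B. -/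
open CategoryTheory MonoidalCategory MonoidalClosed Limits

universe v u

namespace PaperMorita

variable {C : Type u} [Category.{v} C] [MonoidalCategory C] [SymmetricCategory C]
  [MonoidalClosed C]

/-- The transpose of `f : X ⊗ A ⟶ B` under the adjunction `- ⊗ A ⊣ [A,-]`
(obtained from Mathlib's `tensorLeft` adjunction via the symmetry). -/
noncomputable def rcurry {X A B : C} (f : X ⊗ A ⟶ B) : X ⟶ (ihom A).obj B :=
  MonoidalClosed.curry ((β_ A X).hom ≫ f)

/-- The inverse transpose of `g : X ⟶ [A,B]`, a morphism `X ⊗ A ⟶ B`. -/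
noncomputable def runcurry {X A B : C} (g : X ⟶ (ihom A).obj B) : X ⊗ A ⟶ B :=
  (β_ X A).hom ≫ MonoidalClosed.uncurry g

/-- The evaluation morphism `ev_A : [A,B] ⊗ A ⟶ B`. -/
noncomputable def ev (A B : C) : (((ihom A).obj B) ⊗ A) ⟶ B :=
  (β_ _ _).hom ≫ (ihom.ev A).app B

/-- The coevaluation morphism `γ_A : X ⟶ [A, X ⊗ A]`, adjoint to the identity of `X ⊗ A`. -/
noncomputable def coev (A X : C) : X ⟶ (ihom A).obj (X ⊗ A) :=
  rcurry (𝟙 (X ⊗ A))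

/-- The unit morphism `j_A : I ⟶ [A,A]`. -/
noncomputable def junit (A : C) : 𝟙_ C ⟶ (ihom A).obj A :=
  rcurry (λ_ A).hom

/-- The internal composition morphism `c : [B,D] ⊗ [A,B] ⟶ [A,D]`, characterized by
`ev ∘ (c ⊗ id) = ev ∘ (id ⊗ ev)`. -/
noncomputable def icomp (A B D : C) : (((ihom B).obj D) ⊗ ((ihom A).obj B)) ⟶ ((ihom A).obj D) :=
  rcurry ((α_ _ _ _).hom ≫ (_ ◁ ev A B) ≫ ev B D)

/-- A tensorial strength for an endofunctor `T`, in the sense of Kock: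
a natural family `σ_{X,Y} : X ⊗ T(Y) ⟶ T(X ⊗ Y)` satisfying the unit and
associativity axioms. -/
structure Strength (T : C ⥤ C) where
  σ : ∀ X Y : C, X ⊗ T.obj Y ⟶ T.obj (X ⊗ Y)
  naturality_left : ∀ {X X' : C} (f : X ⟶ X') (Y : C),
    (f ▷ T.obj Y) ≫ σ X' Y = σ X Y ≫ T.map (f ▷ Y)
  naturality_right : ∀ (X : C) {Y Y' : C} (f : Y ⟶ Y'),
    (X ◁ T.map f) ≫ σ X Y' = σ X Y ≫ T.map (X ◁ f)
  unit : ∀ Y : C, σ (𝟙_ C) Y ≫ T.map (λ_ Y).hom = (λ_ (T.obj Y)).hom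
  assoc : ∀ X Y Z : C,
    (α_ X Y (T.obj Z)).hom ≫ (X ◁ σ Y Z) ≫ σ X (Y ⊗ Z)
      = σ (X ⊗ Y) Z ≫ T.map (α_ X Y Z).hom

/-- An `E`-enrichment of an endofunctor `T` of the closed symmetric monoidal category `E`:
a natural family `φ_{A,B} : [A,B] ⟶ [T(A),T(B)]` satisfying the unit and composition
axioms and inducing the action of `T` on morphisms under `E(A,B) ≅ E(I,[A,B])`. -/
structure Enrichment (T : C ⥤ C) where
  φ : ∀ A B : C, ((ihom A).obj B) ⟶ ((ihom (T.obj A)).obj (T.obj B))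
  naturality_right : ∀ (A : C) {B B' : C} (g : B ⟶ B'),
    φ A B ≫ (ihom (T.obj A)).map (T.map g) = (ihom A).map g ≫ φ A B'
  naturality_left : ∀ {A' A : C} (f : A' ⟶ A) (B : C),
    φ A B ≫ (MonoidalClosed.pre (T.map f)).app (T.obj B)
      = (MonoidalClosed.pre f).app B ≫ φ A' B
  unit : ∀ A : C, junit A ≫ φ A A = junit (T.obj A)
  comp : ∀ A B D : C,
    icomp A B D ≫ φ A D = (φ B D ⊗ₘ φ A B) ≫ icomp (T.obj A) (T.obj B) (T.obj D)
  induces : ∀ {A B : C} (f : A ⟶ B),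
    rcurry ((λ_ A).hom ≫ f) ≫ φ A B = rcurry ((λ_ (T.obj A)).hom ≫ T.map f)

/-- The enrichment family associated to a tensorial strength:
`φ_{A,B}` is adjoint to `T(ev_A) ∘ σ_{[A,B],A}`. -/
noncomputable def strengthToEnrichmentHom {T : C ⥤ C} (S : Strength T) (A B : C) :
    ((ihom A).obj B) ⟶ ((ihom (T.obj A)).obj (T.obj B)) :=
  rcurry (S.σ ((ihom A).obj B) A ≫ T.map (ev A B))

/-- The strength family associated to an enrichment family `φ`:
`σ_{X,A} = ev_{T(A)} ∘ ((φ_{A,X⊗A} ∘ γ_A) ⊗ id_{T(A)})`. -/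
noncomputable def enrichmentToStrengthHom {T : C ⥤ C}
    (φ : ∀ A B : C, ((ihom A).obj B) ⟶ ((ihom (T.obj A)).obj (T.obj B))) (X A : C) :
    X ⊗ T.obj A ⟶ T.obj (X ⊗ A) :=
  ((coev A X ≫ φ A (X ⊗ A)) ▷ T.obj A) ≫ ev (T.obj A) (T.obj (X ⊗ A))

/-!
Transposing along `- ⊗ A ⊣ [A, -]`, `E`-naturality of `Ψ` at `(A, B)` says that the strength
square of `Ψ` at `([A,B], A)` commutes after postcomposing with `T₂(ev_A)`. So a strong `Ψ` is
`E`-natural. Conversely, every `σ_{X,A}` factors through `σ_{[A, X⊗A], A}` as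
`σ_{X,A} = T(ev_A) ∘ σ_{[A,X⊗A],A} ∘ (γ_A ⊗ id)`, by naturality of `σ` in `X` and the triangle
identity `ev_A ∘ (γ_A ⊗ id) = id`; taking `B = X ⊗ A` then gives the strength square at `(X, A)`.
-/

lemma runcurry_rcurry {X A B : C} (f : X ⊗ A ⟶ B) : runcurry (rcurry f) = f := by
  simp [runcurry, rcurry, ← Category.assoc]

lemma rcurry_runcurry {X A B : C} (g : X ⟶ (ihom A).obj B) : rcurry (runcurry g) = g := by
  simp [runcurry, rcurry, ← Category.assoc]

lemma runcurry_injective {X A B : C} :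
    Function.Injective (runcurry : (X ⟶ (ihom A).obj B) → (X ⊗ A ⟶ B)) :=
  Function.LeftInverse.injective rcurry_runcurry

lemma whiskerRight_ev {X A B : C} (g : X ⟶ (ihom A).obj B) :
    (g ▷ A) ≫ ev A B = runcurry g := by
  simp [ev, runcurry, MonoidalClosed.uncurry_eq, BraidedCategory.braiding_naturality_left_assoc]

lemma runcurry_comp_ihom_map {X A B B' : C} (g : X ⟶ (ihom A).obj B) (f : B ⟶ B') :
    runcurry (g ≫ (ihom A).map f) = runcurry g ≫ f := by
  simp [runcurry, MonoidalClosed.uncurry_natural_right]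

lemma runcurry_comp_pre_app {X A A' B : C} (g : X ⟶ (ihom A).obj B) (f : A' ⟶ A) :
    runcurry (g ≫ (MonoidalClosed.pre f).app B) = (X ◁ f) ≫ runcurry g := by
  simp only [runcurry, MonoidalClosed.uncurry_eq, MonoidalCategory.whiskerLeft_comp,
    Category.assoc, MonoidalClosed.id_tensor_pre_app_comp_ev]
  rw [whisker_exchange_assoc, ← BraidedCategory.braiding_naturality_right_assoc]

lemma coev_whiskerRight_ev (A X : C) : (coev A X ▷ A) ≫ ev A (X ⊗ A) = 𝟙 (X ⊗ A) := by
  rw [whiskerRight_ev, coev, runcurry_rcurry]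

section StrengthLemmas

variable {T : C ⥤ C} (S : Strength T)

lemma runcurry_strengthToEnrichmentHom (A B : C) :
    runcurry (strengthToEnrichmentHom S A B) = S.σ ((ihom A).obj B) A ≫ T.map (ev A B) :=
  runcurry_rcurry _

lemma Strength.coev_whiskerRight_σ_map_ev (X A : C) :
    (coev A X ▷ T.obj A) ≫ S.σ _ A ≫ T.map (ev A (X ⊗ A)) = S.σ X A := by
  rw [← Category.assoc, S.naturality_left, Category.assoc, ← T.map_comp, coev_whiskerRight_ev,
    T.map_id, Category.comp_id]

end StrengthLemmas

lemma strengthToEnrichmentHom_natural_iff {T₁ T₂ : C ⥤ C} (S₁ : Strength T₁)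
    (S₂ : Strength T₂) (Ψ : T₁ ⟶ T₂) (A B : C) :
    strengthToEnrichmentHom S₁ A B ≫ (ihom (T₁.obj A)).map (Ψ.app B)
        = strengthToEnrichmentHom S₂ A B ≫ (MonoidalClosed.pre (Ψ.app A)).app (T₂.obj B) ↔
      S₁.σ _ A ≫ Ψ.app _ ≫ T₂.map (ev A B) = (_ ◁ Ψ.app A) ≫ S₂.σ _ A ≫ T₂.map (ev A B) := by
  rw [← runcurry_injective.eq_iff, runcurry_comp_ihom_map, runcurry_comp_pre_app,
    runcurry_strengthToEnrichmentHom, runcurry_strengthToEnrichmentHom, Category.assoc,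
    Ψ.naturality]

/-- Let `T₁, T₂` be endofunctors of a closed symmetric monoidal category,
equipped with tensorial strengths `σ₁, σ₂` whose corresponding enrichments are `φ₁, φ₂`.
A natural transformation `Ψ : T₁ ⟶ T₂` is strong, i.e.
`Ψ_{X⊗A} ∘ (σ₁)_{X,A} = (σ₂)_{X,A} ∘ (id_X ⊗ Ψ_A)`, if and only if it is `E`-natural, i.e.
`[id_{T₁(A)}, Ψ_B] ∘ (φ₁)_{A,B} = [Ψ_A, id_{T₂(B)}] ∘ (φ₂)_{A,B}`. -/
theorem strong_iff_enriched_natural (T₁ T₂ : C ⥤ C) (S₁ : Strength T₁) (S₂ : Strength T₂)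
    (Ψ : T₁ ⟶ T₂) :
    (∀ X A : C, S₁.σ X A ≫ Ψ.app (X ⊗ A) = (X ◁ Ψ.app A) ≫ S₂.σ X A) ↔
    (∀ A B : C,
      strengthToEnrichmentHom S₁ A B ≫ (ihom (T₁.obj A)).map (Ψ.app B)
        = strengthToEnrichmentHom S₂ A B ≫ (MonoidalClosed.pre (Ψ.app A)).app (T₂.obj B)) := by
  simp only [strengthToEnrichmentHom_natural_iff]
  refine ⟨fun strong A B => by rw [reassoc_of% strong], fun natural X A => ?_⟩
  calc S₁.σ X A ≫ Ψ.app (X ⊗ A)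
      = (coev A X ▷ T₁.obj A) ≫ S₁.σ _ A ≫ Ψ.app _ ≫ T₂.map (ev A (X ⊗ A)) := by
        rw [← Ψ.naturality, reassoc_of% S₁.coev_whiskerRight_σ_map_ev]
    _ = (coev A X ▷ T₁.obj A) ≫ (_ ◁ Ψ.app A) ≫ S₂.σ _ A ≫ T₂.map (ev A (X ⊗ A)) := by
        rw [natural]
    _ = (X ◁ Ψ.app A) ≫ S₂.σ X A := by
        rw [← whisker_exchange_assoc, S₂.coev_whiskerRight_σ_map_ev]

end PaperMorita
end

section
/- Let E be a closed symmetric monoidal category and T₁, T₂ : E ⥤ E functors with tensorial strengths σ₁, σ₂ corresponding to E-enrichments φ₁, φ₂. Then the composite strength on T₂ ∘ T₁ given by (σ_{2,1})_{X,A} = T₂((σ₁)_{X,A}) ∘ (σ₂)_{X,T₁(A)} : X ⊗ T₂T₁(A) ⟶ T₂T₁(X ⊗ A) corresponds, under the bijection between tensorial strengths and E-enrichments, to the composite enrichment (φ₂)_{T₁(A),T₁(B)} ∘ (φ₁)_{A,B} : [A,B] ⟶ [T₂T₁(A), T₂T₁(B)]. -/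
open CategoryTheory MonoidalCategory MonoidalClosed Limits

universe v u

namespace PaperMorita

variable {C : Type u} [Category.{v} C] [MonoidalCategory C] [SymmetricCategory C]
  [MonoidalClosed C]

lemma comp_rcurry {X' X A B : C} (h : X' ⟶ X) (f : X ⊗ A ⟶ B) :
    h ≫ rcurry f = rcurry ((h ▷ A) ≫ f) := by
  rw [rcurry, rcurry, ← MonoidalClosed.curry_natural_left,
    BraidedCategory.braiding_naturality_right_assoc]

lemma rcurry_whiskerRight_ev {X A B : C} (f : X ⊗ A ⟶ B) : (rcurry f ▷ A) ≫ ev A B = f := by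
  rw [rcurry, ev, BraidedCategory.braiding_naturality_left_assoc, ← MonoidalClosed.uncurry_eq,
    MonoidalClosed.uncurry_curry, SymmetricCategory.symmetry_assoc]

lemma rcurry_comp_strengthToEnrichmentHom {T : C ⥤ C} (S : Strength T) {X A B : C}
    (f : X ⊗ A ⟶ B) :
    rcurry f ≫ strengthToEnrichmentHom S A B = rcurry (S.σ X A ≫ T.map f) := by
  rw [strengthToEnrichmentHom, comp_rcurry, ← Category.assoc, S.naturality_left,
    Category.assoc, ← T.map_comp, rcurry_whiskerRight_ev]

/-- For endofunctors `T₁, T₂` with tensorial strengths `σ₁, σ₂`, the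
composite strength `(σ_{2,1})_{X,A} = T₂((σ₁)_{X,A}) ∘ (σ₂)_{X,T₁(A)}` on `T₂ ∘ T₁`
corresponds, under the bijection between strengths and enrichments, to the composite
enrichment `(φ₂)_{T₁(A),T₁(B)} ∘ (φ₁)_{A,B}`. -/
theorem composite_strength_corresponds_to_composite_enrichment
    (T₁ T₂ : C ⥤ C) (S₁ : Strength T₁) (S₂ : Strength T₂) (A B : C) :
    rcurry ((S₂.σ ((ihom A).obj B) (T₁.obj A) ≫ T₂.map (S₁.σ ((ihom A).obj B) A))
        ≫ T₂.map (T₁.map (ev A B)))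
      = strengthToEnrichmentHom S₁ A B
          ≫ strengthToEnrichmentHom S₂ (T₁.obj A) (T₁.obj B) := by
  rw [Category.assoc, ← T₂.map_comp]
  exact (rcurry_comp_strengthToEnrichmentHom S₂ _).symm

end PaperMorita
end

section
/- Let (T, μ, η, σ) be a strong monad on a monoidal category E with unit object I. Then T(I) is a monoid in E with unit η_I : I ⟶ T(I) and multiplication given by the composite μ_I ∘ T(ρ_{T(I)}) ∘ σ_{T(I),I} : T(I) ⊗ T(I) ⟶ T(T(I) ⊗ I) ⟶ T(T(I)) ⟶ T(I). -/
/-! The strength at the unit, `σUnit A := T(ρ_A) ∘ σ_{A,I} : A ⊗ T(I) ⟶ T(A)`, lets `T(I)` act on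
every object, and the multiplication is `μ_I ∘ σUnit (T(I))`. The strength axioms make `σUnit`
natural in `A`, equal to `λ_{T(I)}` at `A = I`, and compatible with `σ_{A,B}` and the associator;
the strong-monad axioms describe `σUnit` after `η_I` and `μ_I`. The unit laws then reduce to those
of the monad, and both sides of the associativity law rewrite to
`μ_I ∘ μ_{T(I)} ∘ T(σUnit (T(I))) ∘ σUnit (T(I) ⊗ T(I))`. -/

open CategoryTheory MonoidalCategory Limits

universe v u

namespace PaperMorita

variable {C : Type u} [Category.{v} C] [MonoidalCategory C]

/-- The two compatibilities of a tensorial strength with the unit and the multiplication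
of a monad, which make `(T, μ, η, σ)` a strong monad in the sense of Kock. -/
def IsStrongMonadStrength (M : Monad C) (S : Strength (M : C ⥤ C)) : Prop :=
  (∀ X Y : C, (X ◁ M.η.app Y) ≫ S.σ X Y = M.η.app (X ⊗ Y)) ∧
  (∀ X Y : C, (X ◁ M.μ.app Y) ≫ S.σ X Y
      = S.σ X ((M : C ⥤ C).obj Y) ≫ (M : C ⥤ C).map (S.σ X Y) ≫ M.μ.app (X ⊗ Y))

/-- The object `T(I)` underlying the endomorphism monoid of a strong monad. -/
def TIobj (M : Monad C) : C := (M : C ⥤ C).obj (𝟙_ C)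

/-- The unit `η_I : I ⟶ T(I)` of the endomorphism monoid of a strong monad. -/
def TIone (M : Monad C) : 𝟙_ C ⟶ TIobj M := M.η.app (𝟙_ C)

/-- The multiplication `μ_I ∘ T(ρ_{T(I)}) ∘ σ_{T(I),I} : T(I) ⊗ T(I) ⟶ T(I)` of the
endomorphism monoid of a strong monad. -/
def TImul (M : Monad C) (S : Strength (M : C ⥤ C)) : TIobj M ⊗ TIobj M ⟶ TIobj M :=
  S.σ (TIobj M) (𝟙_ C) ≫ (M : C ⥤ C).map (ρ_ (TIobj M)).hom ≫ M.μ.app (𝟙_ C)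

namespace Strength

variable {T : C ⥤ C} (S : Strength T)

def σUnit (A : C) : A ⊗ T.obj (𝟙_ C) ⟶ T.obj A :=
  S.σ A (𝟙_ C) ≫ T.map (ρ_ A).hom

theorem whiskerRight_σUnit {A A' : C} (f : A ⟶ A') :
    (f ▷ T.obj (𝟙_ C)) ≫ S.σUnit A' = S.σUnit A ≫ T.map f := by
  rw [σUnit, reassoc_of% S.naturality_left f, σUnit, Category.assoc, ← T.map_comp, ← T.map_comp,
    rightUnitor_naturality]

theorem σUnit_unit : S.σUnit (𝟙_ C) = (λ_ (T.obj (𝟙_ C))).hom := by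
  rw [σUnit, ← unitors_equal, S.unit]

theorem assoc_whiskerLeft_σUnit (A B : C) :
    (α_ A B (T.obj (𝟙_ C))).hom ≫ (A ◁ S.σUnit B) ≫ S.σ A B = S.σUnit (A ⊗ B) := by
  rw [σUnit, MonoidalCategory.whiskerLeft_comp, Category.assoc, S.naturality_right,
    reassoc_of% S.assoc, ← T.map_comp, whiskerLeft_rightUnitor, Iso.hom_inv_id_assoc, σUnit]

end Strength

section StrongMonad

variable (M : Monad C) (S : Strength (M : C ⥤ C))

theorem whiskerLeft_η_σUnit {A : C}
    (hη : (A ◁ M.η.app (𝟙_ C)) ≫ S.σ A (𝟙_ C) = M.η.app (A ⊗ 𝟙_ C)) :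
    (A ◁ M.η.app (𝟙_ C)) ≫ S.σUnit A = (ρ_ A).hom ≫ M.η.app A := by
  rw [Strength.σUnit, reassoc_of% hη]
  exact (M.η.naturality _).symm

theorem whiskerLeft_μ_σUnit {A : C}
    (hμ : (A ◁ M.μ.app (𝟙_ C)) ≫ S.σ A (𝟙_ C)
      = S.σ A ((M : C ⥤ C).obj (𝟙_ C)) ≫ (M : C ⥤ C).map (S.σ A (𝟙_ C)) ≫ M.μ.app (A ⊗ 𝟙_ C)) :
    (A ◁ M.μ.app (𝟙_ C)) ≫ S.σUnit A
      = S.σ A ((M : C ⥤ C).obj (𝟙_ C)) ≫ (M : C ⥤ C).map (S.σUnit A) ≫ M.μ.app A := by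
  rw [Strength.σUnit, reassoc_of% hμ, Functor.map_comp, Category.assoc]
  congr 2
  exact (M.μ.naturality _).symm

theorem TImul_eq :
    TImul M S = S.σUnit ((M : C ⥤ C).obj (𝟙_ C)) ≫ M.μ.app (𝟙_ C) :=
  (Category.assoc _ _ _).symm

theorem TIone_mul : (TIone M ▷ TIobj M) ≫ TImul M S = (λ_ (TIobj M)).hom := by
  simp only [TImul_eq, TIone, TIobj]
  rw [reassoc_of% S.whiskerRight_σUnit, Monad.right_unit]
  exact (Category.comp_id _).trans S.σUnit_unit

theorem TImul_one (hη : ∀ X Y : C, (X ◁ M.η.app Y) ≫ S.σ X Y = M.η.app (X ⊗ Y)) :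
    (TIobj M ◁ TIone M) ≫ TImul M S = (ρ_ (TIobj M)).hom := by
  simp only [TImul_eq, TIone, TIobj]
  rw [reassoc_of% whiskerLeft_η_σUnit M S (hη _ _), Category.assoc, Monad.left_unit]
  exact Category.comp_id _

theorem TImul_assoc
    (hμ : ∀ X Y : C, (X ◁ M.μ.app Y) ≫ S.σ X Y
      = S.σ X ((M : C ⥤ C).obj Y) ≫ (M : C ⥤ C).map (S.σ X Y) ≫ M.μ.app (X ⊗ Y)) :
    (TImul M S ▷ TIobj M) ≫ TImul M S
      = (α_ (TIobj M) (TIobj M) (TIobj M)).hom ≫ (TIobj M ◁ TImul M S) ≫ TImul M S := by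
  simp only [TImul_eq, TIobj, MonoidalCategory.comp_whiskerRight,
    MonoidalCategory.whiskerLeft_comp, Category.assoc]
  rw [reassoc_of% S.whiskerRight_σUnit (M.μ.app (𝟙_ C)), M.assoc,
    reassoc_of% S.whiskerRight_σUnit, reassoc_of% whiskerLeft_μ_σUnit M S (hμ _ _),
    reassoc_of% S.assoc_whiskerLeft_σUnit]

end StrongMonad

/-- Let `(T, μ, η, σ)` be a strong monad on a monoidal category with unit
object `I`.  Then `T(I)` is a monoid with unit `η_I` and multiplication
`μ_I ∘ T(ρ_{T(I)}) ∘ σ_{T(I),I}`. -/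
theorem TI_is_monoid (M : Monad C) (S : Strength (M : C ⥤ C))
    (hS : IsStrongMonadStrength M S) :
    (TIone M ▷ TIobj M) ≫ TImul M S = (λ_ (TIobj M)).hom ∧
    (TIobj M ◁ TIone M) ≫ TImul M S = (ρ_ (TIobj M)).hom ∧
    (TImul M S ▷ TIobj M) ≫ TImul M S
      = (α_ (TIobj M) (TIobj M) (TIobj M)).hom ≫ (TIobj M ◁ TImul M S) ≫ TImul M S :=
  ⟨TIone_mul M S, TImul_one M S hS.1, TImul_assoc M S hS.2⟩

end PaperMorita
end

section
/- Let E be a closed symmetric monoidal category with equalizers, (T, μ, η) a monad on E whose underlying functor carries an E-enrichment φ, and let (X, ξ_X) and (Y, ξ_Y) be T-algebras. Let i : A(X,Y) ⟶ [X,Y] be the equalizer of the two morphisms [X,Y] ⟶ [T(X),Y] given by [T(X), ξ_Y] ∘ φ_{X,Y} and [ξ_X, Y]. Then morphisms I ⟶ A(X,Y) in E correspond bijectively, by composing with i and applying the bijection E(I,[X,Y]) ≅ E(X,Y), to morphisms of T-algebras (X, ξ_X) ⟶ (Y, ξ_Y). -/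
open CategoryTheory MonoidalCategory MonoidalClosed Limits

universe v u

namespace PaperMorita

variable {C : Type u} [Category.{v} C] [MonoidalCategory C] [SymmetricCategory C]
  [MonoidalClosed C]

/-! Under `E(A,B) ≅ E(I,[A,B])` the enrichment becomes the action of `T` on morphisms, and
`[T(X), ξ_Y]`, `[ξ_X, Y]` become composition with `ξ_Y` and `ξ_X`. So a global element of `[X,Y]`
factors through the equalizer `A(X,Y)` exactly when it names a morphism of algebras. -/

lemma rcurry_leftUnitor_hom_comp {A B : C} (f : A ⟶ B) :
    rcurry ((λ_ A).hom ≫ f) = curry' f := by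
  rw [rcurry, curry', braiding_leftUnitor_assoc]

lemma leftUnitor_inv_comp_runcurry {A B : C} (g : 𝟙_ C ⟶ (ihom A).obj B) :
    (λ_ A).inv ≫ runcurry g = uncurry' g := by
  rw [runcurry, uncurry', leftUnitor_inv_braiding_assoc]

omit [SymmetricCategory C] in
lemma curry'_comp_pre_app {A' A B : C} (f : A' ⟶ A) (g : A ⟶ B) :
    curry' g ≫ (pre f).app B = curry' (f ≫ g) := by
  rw [curry', curry', curry_pre_app, rightUnitor_naturality_assoc]

lemma Enrichment.curry'_comp_φ {T : C ⥤ C} (E : Enrichment T) {A B : C} (f : A ⟶ B) :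
    curry' f ≫ E.φ A B = curry' (T.map f) := by
  simpa only [rcurry_leftUnitor_hom_comp] using E.induces f

def Monad.Algebra.homEquiv {M : Monad C} (X Y : M.Algebra) :
    (X ⟶ Y) ≃ { f : X.A ⟶ Y.A // (M : C ⥤ C).map f ≫ Y.a = X.a ≫ f } where
  toFun g := ⟨g.f, g.h⟩
  invFun f := ⟨f.1, f.2⟩

lemma curry'_equalizes_iff {M : Monad C} (E : Enrichment (M : C ⥤ C)) (X Y : M.Algebra)
    (f : X.A ⟶ Y.A) :
    curry' f ≫ (E.φ X.A Y.A ≫ (ihom ((M : C ⥤ C).obj X.A)).map Y.a)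
        = curry' f ≫ (pre X.a).app Y.A ↔ (M : C ⥤ C).map f ≫ Y.a = X.a ≫ f := by
  rw [← Category.assoc, E.curry'_comp_φ, curry'_ihom_map, curry'_comp_pre_app]
  exact curryHomEquiv'.injective.eq_iff

/-- Let `(T, μ, η)` be a monad on a closed symmetric monoidal category
with equalizers, whose underlying functor carries an `E`-enrichment `φ`, and let
`(X, ξ_X)`, `(Y, ξ_Y)` be `T`-algebras.  If `i : A(X,Y) ⟶ [X,Y]` is the equalizer of
`[T(X), ξ_Y] ∘ φ_{X,Y}` and `[ξ_X, Y]`, then morphisms `I ⟶ A(X,Y)` correspond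
bijectively (by composing with `i` and applying `E(I,[X,Y]) ≅ E(X,Y)`) to morphisms of
`T`-algebras `(X, ξ_X) ⟶ (Y, ξ_Y)`. -/
theorem algebra_homs_as_equalizer (M : Monad C) (E : Enrichment (M : C ⥤ C))
    (X Y : M.Algebra) (AXY : C) (i : AXY ⟶ (ihom X.A).obj Y.A)
    (w : i ≫ (E.φ X.A Y.A ≫ (ihom ((M : C ⥤ C).obj X.A)).map Y.a)
        = i ≫ (MonoidalClosed.pre X.a).app Y.A)
    (hl : IsLimit (Fork.ofι i w)) :
    ∃ e : (𝟙_ C ⟶ AXY) ≃ (X ⟶ Y),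
      ∀ g : 𝟙_ C ⟶ AXY, (e g).f = (λ_ X.A).inv ≫ runcurry (g ≫ i) := by
  let e : (𝟙_ C ⟶ AXY) ≃ (X ⟶ Y) :=
    (Fork.IsLimit.homIso hl (𝟙_ C)).trans <|
      (curryHomEquiv'.symm.subtypeEquiv fun h => by
        simpa only [curryHomEquiv'_symm_apply, curry'_uncurry'] using
          curry'_equalizes_iff E X Y (uncurry' h)).trans
      (Monad.Algebra.homEquiv X Y).symm
  exact ⟨e, fun g => (leftUnitor_inv_comp_runcurry (g ≫ i)).symm⟩

end PaperMorita
end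

section
/- Let T be a monad on a cocomplete category C. Then the Eilenberg–Moore category Alg_T of T-algebras is cocomplete if and only if it has reflexive coequalizers. -/
/-!
By the adjoint triangle theorem, `const : Alg_T ⥤ (J ⥤ Alg_T)` has a left adjoint (i.e. `Alg_T`
has colimits of shape `J`) provided `Alg_T` has reflexive coequalizers, the composite of `const`
with the forgetful functor `(J ⥤ Alg_T) ⥤ (J ⥤ C)` has a left adjoint (it is `const` of the
cocomplete `C` after the forgetful functor `Alg_T ⥤ C`), and the counit of the free–forgetful
adjunction on `J ⥤ Alg_T` consists of regular epimorphisms. That counit is, objectwise, the Beck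
coequalizer presenting an algebra as a coequalizer of free algebras.
-/

open CategoryTheory Limits

universe v u

namespace CategoryTheory.Adjunction

variable {C D : Type*} [Category C] [Category D] {F : C ⥤ D} {G : D ⥤ C}

def beckCofork (adj : F ⊣ G) (X : D) :
    Cofork (F.map (G.map (adj.counit.app X))) (adj.counit.app (F.obj (G.obj X))) :=
  Cofork.ofπ (adj.counit.app X) (adj.counit.naturality _)

variable {adj : F ⊣ G}

def isColimitWhiskerRightBeckCofork (J : Type*) [Category J]
    (h : ∀ X, IsColimit (adj.beckCofork X)) (X : J ⥤ D) :
    IsColimit ((adj.whiskerRight (C := J)).beckCofork X) :=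
  evaluationJointlyReflectsColimits _ fun j =>
    (isColimitMapCoconeCoforkEquiv _ _).symm <|
      Cofork.isColimitOfIsos _ (h (X.obj j)) _ (Iso.refl _) (Iso.refl _) (Iso.refl _)

theorem hasColimitsOfShape_of_isColimit_beckCofork {J : Type*} [Category J]
    [HasColimitsOfShape J C] [HasReflexiveCoequalizers D]
    (h : ∀ X, IsColimit (adj.beckCofork X)) : HasColimitsOfShape J D := by
  have : (Functor.const J ⋙ (Functor.whiskeringRight J D C).obj G).IsRightAdjoint :=
    (((colimConstAdj (J := J) (C := C)).comp adj).ofNatIsoRight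
      (Functor.compConstIso J G)).isRightAdjoint
  rw [hasColimitsOfShape_iff_isRightAdjoint_const]
  exact isRightAdjoint_triangle_lift (Functor.const J) (adj.whiskerRight (C := J))
    fun X => ⟨_, _, _, _, isColimitWhiskerRightBeckCofork J h X⟩

end CategoryTheory.Adjunction

namespace CategoryTheory.Monad

variable {C : Type*} [Category C] {T : Monad C}

def isColimitBeckCofork (X : T.Algebra) : IsColimit ((Monad.adj T).beckCofork X) :=
  have htop :
      T.free.map (T.forget.map ((Monad.adj T).counit.app X)) = FreeCoequalizer.topMap X := by
    rw [Monad.adj_counit]; rfl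
  have hbottom :
      (Monad.adj T).counit.app (T.free.obj X.A) = FreeCoequalizer.bottomMap X := by
    rw [Monad.adj_counit]; rfl
  have hπ : (Monad.adj T).counit.app X = FreeCoequalizer.π X := by
    rw [Monad.adj_counit]; rfl
  Cofork.isColimitOfIsos _ (beckAlgebraCoequalizer X) _ (Iso.refl _) (Iso.refl _) (Iso.refl _)
    ((Category.id_comp _).trans (htop.trans (Category.comp_id _).symm))
    ((Category.id_comp _).trans (hbottom.trans (Category.comp_id _).symm))
    ((Category.id_comp _).trans ((Category.comp_id _).trans hπ.symm))

end CategoryTheory.Monad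

namespace PaperMorita

/-- Let `T` be a monad on a cocomplete category `C`.  Then the
Eilenberg–Moore category of `T`-algebras is cocomplete if and only if it has reflexive
coequalizers. -/
theorem algebra_cocomplete_iff_hasReflexiveCoequalizers
    {C : Type u} [Category.{v} C] [HasColimits C] (T : Monad C) :
    HasColimits T.Algebra ↔ HasReflexiveCoequalizers T.Algebra :=
  ⟨fun _ => inferInstance, fun _ =>
    ⟨fun _ _ => (Monad.adj T).hasColimitsOfShape_of_isColimit_beckCofork
      Monad.isColimitBeckCofork⟩⟩

end PaperMorita
end

section
/- Let S and T be monads on a category C and φ : S ⟶ T a morphism of monads, and suppose that the Eilenberg–Moore category Alg_T of T-algebras has reflexive coequalizers. Then the restriction functor G : Alg_T ⟶ Alg_S, sending a T-algebra (X, ξ) to the S-algebra (X, ξ ∘ φ_X), has a left adjoint; for an S-algebra (X, ξ_X), its value is the reflexive coequalizer in Alg_T of the pair F_T(ξ_X) and μ_X ∘ T(φ_X) : F_T(S(X)) ⇉ F_T(X), with common section F_T(η^S_X). -/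
/-!
Write `G` for the restriction functor and `F(X)` for the coequalizer of the pair. A map
`F(X) ⟶ Y` is a map `g : F_T(X) ⟶ Y` coequalizing the pair, and by the free–forgetful
adjunction `g` is the free extension of some `k : X ⟶ Y`. Precomposing a free extension with
either map of the pair is again a free extension: of `ξ_X ≫ k` and of `S(k) ≫ φ_Y ≫ ξ_Y`
respectively. So `g` coequalizes the pair iff these agree, i.e. iff `k` is an `S`-algebra map
`X ⟶ G(Y)`. This bijection is natural in `Y`, which makes `X ↦ F(X)` a left adjoint of `G`.
-/

open CategoryTheory Limits

universe v u

namespace PaperMorita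

variable {C : Type u} [Category.{v} C]

/-- For a morphism of monads `φ : S ⟶ T` and an `S`-algebra `(X, ξ_X)`, the morphism of
free `T`-algebras `F_T(S(X)) ⟶ F_T(X)` whose underlying morphism is
`μ_X ∘ T(φ_X) : T(S(X)) ⟶ T(T(X)) ⟶ T(X)`. -/
def restrictionPairSnd {S T : Monad C} (φ : S ⟶ T) (X : S.Algebra) :
    T.free.obj ((S : C ⥤ C).obj X.A) ⟶ T.free.obj X.A where
  f := (T : C ⥤ C).map (φ.app X.A) ≫ T.μ.app X.A
  h := by
    dsimp only [Monad.free]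
    rw [Functor.map_comp, Category.assoc, Monad.assoc, ← Category.assoc,
      ← Functor.comp_map, T.μ.naturality, Category.assoc]

end PaperMorita

theorem CategoryTheory.Monad.adj_homEquiv_symm_apply_f {C : Type u} [Category.{v} C]
    {T : Monad C} {X : C} {Y : T.Algebra} (k : X ⟶ T.forget.obj Y) :
    ((T.adj.homEquiv X Y).symm k).f = T.map k ≫ Y.a := by
  rw [Adjunction.homEquiv_counit, Monad.adj_counit]
  rfl

namespace PaperMorita

variable {C : Type u} [Category.{v} C] {S T : Monad C} (φ : S ⟶ T)

theorem free_map_unit_comp_free_map_a (X : S.Algebra) :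
    T.free.map (S.η.app X.A) ≫ T.free.map X.a = 𝟙 (T.free.obj X.A) := by
  rw [← Functor.map_comp, X.unit]
  exact T.free.map_id X.A

theorem free_map_unit_comp_restrictionPairSnd (X : S.Algebra) :
    T.free.map (S.η.app X.A) ≫ restrictionPairSnd φ X = 𝟙 (T.free.obj X.A) := by
  ext
  change T.map (S.η.app X.A) ≫ T.map (φ.app X.A) ≫ T.μ.app X.A = 𝟙 _
  rw [← Functor.map_comp_assoc, φ.app_η, Monad.right_unit]

instance isReflexivePair_restrictionPair (X : S.Algebra) :
    IsReflexivePair (T.free.map X.a) (restrictionPairSnd φ X) :=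
  .mk' _ (free_map_unit_comp_free_map_a X) (free_map_unit_comp_restrictionPairSnd φ X)

theorem restrictionPairSnd_comp_homEquiv_symm (X : S.Algebra) (Y : T.Algebra)
    (k : X.A ⟶ T.forget.obj Y) :
    restrictionPairSnd φ X ≫ (T.adj.homEquiv _ _).symm k =
      (T.adj.homEquiv _ _).symm ((S : C ⥤ C).map k ≫ φ.app Y.A ≫ Y.a) := by
  ext
  rw [Monad.Algebra.comp_f, Monad.adj_homEquiv_symm_apply_f, Monad.adj_homEquiv_symm_apply_f]
  -- `T.forget.obj Y` unfolds to `Y.A` only at default transparency, which would block `rw`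
  change X.A ⟶ Y.A at k
  change (T.map (φ.app X.A) ≫ T.μ.app X.A) ≫ T.map k ≫ Y.a =
    T.map (S.map k ≫ φ.app Y.A ≫ Y.a) ≫ Y.a
  rw [φ.naturality_assoc]
  simp only [Functor.map_comp, Category.assoc, ← Y.assoc]
  exact congrArg _ (T.μ.naturality_assoc k Y.a).symm

theorem free_map_a_comp_eq_iff (X : S.Algebra) (Y : T.Algebra) (k : X.A ⟶ T.forget.obj Y) :
    T.free.map X.a ≫ (T.adj.homEquiv _ _).symm k =
        restrictionPairSnd φ X ≫ (T.adj.homEquiv _ _).symm k ↔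
      (S : C ⥤ C).map k ≫ φ.app Y.A ≫ Y.a = X.a ≫ k := by
  rw [← Adjunction.homEquiv_naturality_left_symm, restrictionPairSnd_comp_homEquiv_symm,
    Equiv.apply_eq_iff_eq, eq_comm]
  rfl

variable [HasReflexiveCoequalizers T.Algebra]

noncomputable def leftAdjointHomEquiv (X : S.Algebra) (Y : T.Algebra) :
    (coequalizer (T.free.map X.a) (restrictionPairSnd φ X) ⟶ Y) ≃
      (X ⟶ (Monad.algebraFunctorOfMonadHom φ).obj Y) :=
  (Cofork.IsColimit.homIso (coequalizerIsCoequalizer _ _) Y).trans <|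
    (Equiv.subtypeEquiv (T.adj.homEquiv X.A Y).symm
      fun k => (free_map_a_comp_eq_iff φ X Y k).symm).symm.trans
    { toFun := fun k => ⟨k.1, k.2⟩
      invFun := fun k => ⟨k.f, k.h⟩ }

theorem leftAdjointHomEquiv_naturality (X : S.Algebra) (Y Y' : T.Algebra) (g : Y ⟶ Y')
    (h : coequalizer (T.free.map X.a) (restrictionPairSnd φ X) ⟶ Y) :
    leftAdjointHomEquiv φ X Y' (h ≫ g) =
      leftAdjointHomEquiv φ X Y h ≫ (Monad.algebraFunctorOfMonadHom φ).map g := by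
  ext
  change T.adj.homEquiv X.A Y' (coequalizer.π _ _ ≫ h ≫ g) =
    T.adj.homEquiv X.A Y (coequalizer.π _ _ ≫ h) ≫ g.f
  rw [← Category.assoc]
  exact T.adj.homEquiv_naturality_right _ g

/-- Let `φ : S ⟶ T` be a morphism of monads on `C` and suppose the
Eilenberg–Moore category of `T`-algebras has reflexive coequalizers.  Then the restriction
functor `G : Alg_T ⟶ Alg_S`, `(X, ξ) ↦ (X, ξ ∘ φ_X)`, has a left adjoint `F`; for an
`S`-algebra `(X, ξ_X)` the value `F(X)` is the reflexive coequalizer in `Alg_T` of the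
pair `F_T(ξ_X)` and `μ_X ∘ T(φ_X) : F_T(S(X)) ⇉ F_T(X)`, with common section
`F_T(η^S_X)`. -/
theorem monadHom_restriction_hasLeftAdjoint
    (S T : Monad C) (φ : S ⟶ T) [HasReflexiveCoequalizers T.Algebra] :
    ∃ (F : S.Algebra ⥤ T.Algebra) (_adj : F ⊣ Monad.algebraFunctorOfMonadHom φ),
      ∀ X : S.Algebra,
        -- the pair is reflexive, with common section `F_T(η^S_X)`
        (T.free.map (S.η.app X.A) ≫ T.free.map X.a = 𝟙 (T.free.obj X.A)) ∧
        (T.free.map (S.η.app X.A) ≫ restrictionPairSnd φ X = 𝟙 (T.free.obj X.A)) ∧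
        -- and `F(X)` is its coequalizer
        ∃ (π : T.free.obj X.A ⟶ F.obj X)
          (w : T.free.map X.a ≫ π = restrictionPairSnd φ X ≫ π),
          Nonempty (IsColimit (Cofork.ofπ π w)) :=
  ⟨Adjunction.leftAdjointOfEquiv (leftAdjointHomEquiv φ) (leftAdjointHomEquiv_naturality φ),
    Adjunction.adjunctionOfEquivLeft _ _, fun X =>
      ⟨free_map_unit_comp_free_map_a X, free_map_unit_comp_restrictionPairSnd φ X,
        coequalizer.π _ _, coequalizer.condition _ _, ⟨coequalizerIsCoequalizer _ _⟩⟩⟩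

end PaperMorita
end

section
/- Let M be a model category. Consider a commutative cube with top face consisting of maps X' ⟶ Y', X' ⟶ T', Y' ⟶ Z', T' ⟶ Z' and bottom face consisting of maps X ⟶ Y, X ⟶ T, Y ⟶ Z, T ⟶ Z, such that both the top and the bottom faces are homotopical cell attachments. If the three vertical maps X' ⟶ X, Y' ⟶ Y and T' ⟶ T are weak equivalences, then the fourth vertical map Z' ⟶ Z is also a weak equivalence between cofibrant objects. -/
open CategoryTheory Limits

universe v u

namespace PaperMorita

variable {M : Type u} [Category.{v} M]

/-- `f` is a retract of `g` in the arrow category: there are morphisms `i, i'` and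
`r, r'` with `r ∘ i = id`, `r' ∘ i' = id`, exhibiting the square of `f` as a retract of
the square of `g`. -/
def IsRetractOfArrow {X X' Y Y' : M} (f : X ⟶ X') (g : Y ⟶ Y') : Prop :=
  ∃ (i : X ⟶ Y) (r : Y ⟶ X) (i' : X' ⟶ Y') (r' : Y' ⟶ X'),
    i ≫ r = 𝟙 X ∧ i' ≫ r' = 𝟙 X' ∧ i ≫ g = f ≫ i' ∧ g ≫ r' = r ≫ f

/-- A (Quillen) model structure on a category `M` with finite limits and colimits:
classes of cofibrations, weak equivalences and fibrations satisfying the two-out-of-three,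
retract, lifting and factorization axioms. -/
structure ModelStructure (M : Type u) [Category.{v} M] where
  cof : MorphismProperty M
  we : MorphismProperty M
  fib : MorphismProperty M
  -- the three classes are subcategories (containing all objects, closed under composition)
  cof_id : ∀ X : M, cof (𝟙 X)
  we_id : ∀ X : M, we (𝟙 X)
  fib_id : ∀ X : M, fib (𝟙 X)
  cof_comp : ∀ {X Y Z : M} (f : X ⟶ Y) (g : Y ⟶ Z), cof f → cof g → cof (f ≫ g)
  fib_comp : ∀ {X Y Z : M} (f : X ⟶ Y) (g : Y ⟶ Z), fib f → fib g → fib (f ≫ g)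
  -- QM2: two out of three for weak equivalences
  we_comp : ∀ {X Y Z : M} (f : X ⟶ Y) (g : Y ⟶ Z), we f → we g → we (f ≫ g)
  we_of_comp_left : ∀ {X Y Z : M} (f : X ⟶ Y) (g : Y ⟶ Z), we f → we (f ≫ g) → we g
  we_of_comp_right : ∀ {X Y Z : M} (f : X ⟶ Y) (g : Y ⟶ Z), we g → we (f ≫ g) → we f
  -- QM3: stability under retracts
  cof_retract : ∀ {X X' Y Y' : M} (f : X ⟶ X') (g : Y ⟶ Y'),
    IsRetractOfArrow f g → cof g → cof f
  we_retract : ∀ {X X' Y Y' : M} (f : X ⟶ X') (g : Y ⟶ Y'),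
    IsRetractOfArrow f g → we g → we f
  fib_retract : ∀ {X X' Y Y' : M} (f : X ⟶ X') (g : Y ⟶ Y'),
    IsRetractOfArrow f g → fib g → fib f
  -- QM4: lifting
  lift_acyclic_cof : ∀ {A B X Y : M} (i : A ⟶ B) (p : X ⟶ Y),
    cof i → we i → fib p → HasLiftingProperty i p
  lift_acyclic_fib : ∀ {A B X Y : M} (i : A ⟶ B) (p : X ⟶ Y),
    cof i → fib p → we p → HasLiftingProperty i p
  -- QM5: factorization
  factor_acyclicCof_fib : ∀ {X Y : M} (f : X ⟶ Y),
    ∃ (Z : M) (g : X ⟶ Z) (h : Z ⟶ Y), cof g ∧ we g ∧ fib h ∧ g ≫ h = f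
  factor_cof_acyclicFib : ∀ {X Y : M} (f : X ⟶ Y),
    ∃ (Z : M) (g : X ⟶ Z) (h : Z ⟶ Y), cof g ∧ we h ∧ fib h ∧ g ≫ h = f

variable [HasFiniteLimits M] [HasFiniteColimits M]

/-- An object is cofibrant if the unique map from the initial object is a cofibration. -/
def Cofibrant (D : ModelStructure M) (X : M) : Prop :=
  D.cof (initial.to X)

/-- A commutative square
```
X ⟶ T
↓     ↓
Y ⟶ Z
```
is a homotopical cell attachment if `X, Y, T, Z` are cofibrant, the vertical maps
`X ⟶ Y` and `T ⟶ Z` are cofibrations, and the comparison map `T ∪_X Y ⟶ Z` from the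
pushout is a weak equivalence. -/
def IsHomotopicalCellAttachment (D : ModelStructure M) {X Y T Z : M}
    (f₁ : X ⟶ Y) (f₂ : X ⟶ T) (g₁ : Y ⟶ Z) (g₂ : T ⟶ Z)
    (w : f₁ ≫ g₁ = f₂ ≫ g₂) : Prop :=
  Cofibrant D X ∧ Cofibrant D Y ∧ Cofibrant D T ∧ Cofibrant D Z ∧
  D.cof f₁ ∧ D.cof g₂ ∧ D.we (pushout.desc g₁ g₂ w)

/-!
The top and bottom comparison maps `T' ⊔_{X'} Y' ⟶ Z'` and `T ⊔_X Y ⟶ Z` are weak equivalences,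
so by two-out-of-three it suffices that the map of spans `(vY, vX, vT)` induces a weak
equivalence of pushouts. This is the cube lemma, proved by Ken Brown's trick for spans: factor
`X' ⨿ X ⟶ X` as a cofibration `X' ⨿ X ⟶ CX` followed by a trivial fibration, and extend it
over the two legs to a span `CY ← CX → CT` that receives both spans and retracts onto the
bottom one. Both maps into it are Reedy trivial cofibrations (the `T`-component and the relative
latching map `Y' ⊔_{X'} CX ⟶ CY` are trivial cofibrations), and for those the pushout map is a
composite of two cobase changes of trivial cofibrations.
-/

open HomotopicalAlgebra MorphismProperty

attribute [local simp] pushout.map pushout.inl_desc pushout.inr_desc pushout.inl_desc_assoc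
  pushout.inr_desc_assoc coprod.inl_desc coprod.inr_desc coprod.inl_desc_assoc coprod.inr_desc_assoc

lemma isRetractOfArrow_of_retractArrow {C : Type*} [Category C] {X Y Z W : C} {f : X ⟶ Y}
    {g : Z ⟶ W} (h : RetractArrow f g) : IsRetractOfArrow f g :=
  ⟨h.i.left, h.r.left, h.i.right, h.r.right, Arrow.hom.congr_left h.retract,
    Arrow.hom.congr_right h.retract, h.i.w, h.r.w.symm⟩

abbrev ModelStructure.toModelCategory (D : ModelStructure M) : ModelCategory M where
  categoryWithFibrations := ⟨D.fib⟩
  categoryWithCofibrations := ⟨D.cof⟩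
  categoryWithWeakEquivalences := ⟨D.we⟩
  cm2 :=
    { comp_mem := D.we_comp
      of_postcomp := D.we_of_comp_right
      of_precomp := D.we_of_comp_left }
  cm3a := ⟨fun h => D.we_retract _ _ (isRetractOfArrow_of_retractArrow h)⟩
  cm3b := ⟨fun h => D.fib_retract _ _ (isRetractOfArrow_of_retractArrow h)⟩
  cm3c := ⟨fun h => D.cof_retract _ _ (isRetractOfArrow_of_retractArrow h)⟩
  cm4a i p hi hi' hp := D.lift_acyclic_cof i p hi.mem hi'.mem hp.mem
  cm4b i p hi hp hp' := D.lift_acyclic_fib i p hi.mem hp.mem hp'.mem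
  cm5a := ⟨fun f => by
    obtain ⟨Z, i, p, hi, hi', hp, fac⟩ := D.factor_acyclicCof_fib f
    exact ⟨⟨Z, i, p, fac, ⟨hi, hi'⟩, hp⟩⟩⟩
  cm5b := ⟨fun f => by
    obtain ⟨Z, i, p, hi, hp', hp, fac⟩ := D.factor_cof_acyclicFib f
    exact ⟨⟨Z, i, p, fac, hi, ⟨hp, hp'⟩⟩⟩⟩

section

variable {C : Type*} [Category C] [ModelCategory C]

lemma cofibration_of_isPushout {A A' B B' : C} {f : A ⟶ A'} {g : A ⟶ B} {f' : B ⟶ B'}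
    {g' : A' ⟶ B'} (h : IsPushout g f f' g') [Cofibration f] : Cofibration f' := by
  rw [cofibration_iff] at *
  exact MorphismProperty.of_isPushout h ‹_›

lemma weakEquivalence_of_isPushout {A A' B B' : C} {f : A ⟶ A'} {g : A ⟶ B} {f' : B ⟶ B'}
    {g' : A' ⟶ B'} (h : IsPushout g f f' g') [Cofibration f] [WeakEquivalence f] :
    WeakEquivalence f' := by
  rw [weakEquivalence_iff]
  exact (MorphismProperty.of_isPushout h (mem_trivialCofibrations f)).2

lemma weakEquivalence_pushout_map_of_trivialCofibrations {X' Y' T' X Y T : C}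
    (f₁' : X' ⟶ Y') (f₂' : X' ⟶ T') (f₁ : X ⟶ Y) (f₂ : X ⟶ T)
    (vX : X' ⟶ X) (vY : Y' ⟶ Y) (vT : T' ⟶ T)
    (sq₁ : f₁' ≫ vY = vX ≫ f₁) (sq₂ : f₂' ≫ vT = vX ≫ f₂)
    [Cofibration vT] [WeakEquivalence vT]
    [Cofibration (pushout.desc vY f₁ sq₁)] [WeakEquivalence (pushout.desc vY f₁ sq₁)] :
    WeakEquivalence (pushout.map f₁' f₂' f₁ f₂ vY vT vX sq₁ sq₂) := by
  -- factor through `Y' ⊔_{X'} T`: first change `T'` to `T`, then `Y'` to `Y` and `X'` to `X`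
  let u := pushout.map f₁' f₂' f₁' (vX ≫ f₂) (𝟙 _) vT (𝟙 _) (by simp) (by simpa using sq₂)
  let v := pushout.map f₁' (vX ≫ f₂) f₁ f₂ vY (𝟙 _) vX sq₁ (by simp)
  let m := pushout.map f₁' vX f₁' (vX ≫ f₂) (𝟙 _) f₂ (𝟙 _) (by simp) (by simp)
  have hu : IsPushout (pushout.inr _ _) vT u (pushout.inr _ _) :=
    IsPushout.of_top (by simpa [u, sq₂] using IsPushout.of_hasPushout f₁' (vX ≫ f₂))
      (by simp [u]) (IsPushout.of_hasPushout f₁' f₂')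
  have hm : IsPushout (pushout.inr _ _) f₂ m (pushout.inr _ _) :=
    IsPushout.of_top (by simpa [m] using IsPushout.of_hasPushout f₁' (vX ≫ f₂))
      (by simp [m]) (IsPushout.of_hasPushout f₁' vX)
  have hv : IsPushout m (pushout.desc vY f₁ sq₁) v (pushout.inl _ _) :=
    (IsPushout.of_left (by simpa [v] using IsPushout.of_hasPushout f₁ f₂)
      (by ext <;> simp [m, v, pushout.condition]) hm).flip
  have := weakEquivalence_of_isPushout hu
  have := weakEquivalence_of_isPushout hv
  have huv : u ≫ v = pushout.map f₁' f₂' f₁ f₂ vY vT vX sq₁ sq₂ := by ext <;> simp [u, v]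
  rw [← huv]
  infer_instance

lemma exists_compatible_factorization_of_cofibrations {X' X Y' Y CX : C}
    (f₁' : X' ⟶ Y') (f₁ : X ⟶ Y) (vX : X' ⟶ X) (vY : Y' ⟶ Y) (sq₁ : f₁' ≫ vY = vX ≫ f₁)
    (κ' : X' ⟶ CX) (κ : X ⟶ CX) (p : CX ⟶ X) (hκ' : κ' ≫ p = vX) (hκ : κ ≫ p = 𝟙 X)
    [Cofibration f₁'] [Cofibration f₁] [WeakEquivalence vY]
    [Cofibration κ'] [WeakEquivalence κ'] [Cofibration κ] [WeakEquivalence κ] :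
    ∃ (CY : C) (ι' : Y' ⟶ CY) (ι : Y ⟶ CY) (F : CX ⟶ CY) (pY : CY ⟶ Y)
      (w' : f₁' ≫ ι' = κ' ≫ F) (w : f₁ ≫ ι = κ ≫ F),
      ι' ≫ pY = vY ∧ ι ≫ pY = 𝟙 Y ∧ F ≫ pY = p ≫ f₁ ∧
      (Cofibration (pushout.desc ι' F w') ∧ WeakEquivalence (pushout.desc ι' F w')) ∧
      (Cofibration (pushout.desc ι F w) ∧ WeakEquivalence (pushout.desc ι F w)) := by
  -- `CY` factors `Y ⊔_X (Y' ⊔_{X'} CX) ⟶ Y`; the two latching maps into this iterated pushout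
  -- are cobase changes of `f₁` and of `f₁'` respectively
  let d : pushout f₁ (κ ≫ pushout.inr f₁' κ') ⟶ Y :=
    pushout.desc (𝟙 Y) (pushout.desc vY (p ≫ f₁) (by rw [reassoc_of% hκ', sq₁]))
      (by simp [reassoc_of% hκ])
  let h := factorizationData (cofibrations C) (trivialFibrations C) d
  have : Cofibration h.i := (cofibration_iff _).2 h.hi
  have : WeakEquivalence h.p := ((mem_trivialFibrations_iff _).1 h.hp).2
  have hfac := h.fac
  let ι' := pushout.inl f₁' κ' ≫ pushout.inr _ _ ≫ h.i
  let ι := pushout.inl f₁ (κ ≫ pushout.inr f₁' κ') ≫ h.i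
  let F := pushout.inr f₁' κ' ≫ pushout.inr _ _ ≫ h.i
  have w' : f₁' ≫ ι' = κ' ≫ F := pushout.condition_assoc _
  have w : f₁ ≫ ι = κ ≫ F := by
    simpa [ι, F] using pushout.condition_assoc (f := f₁) (g := κ ≫ pushout.inr f₁' κ') h.i
  have hι' : ι' ≫ h.p = vY := by simp [ι', hfac, d]
  have hι : ι ≫ h.p = 𝟙 Y := by simp [ι, hfac, d]
  have : WeakEquivalence ι' := weakEquivalence_of_postcomp_of_fac hι'
  have : WeakEquivalence ι := weakEquivalence_of_postcomp_of_fac hι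
  refine ⟨h.Z, ι', ι, F, h.p, w', w, hι', hι, by simp [F, hfac, d], ?_, ?_⟩
  · have e : pushout.desc ι' F w' = pushout.inr _ _ ≫ h.i := by ext <;> simp [ι', F]
    have : WeakEquivalence (pushout.desc ι' F w') :=
      weakEquivalence_of_precomp_of_fac (pushout.inl_desc ι' F w')
    exact ⟨e ▸ inferInstance, this⟩
  · let m : pushout f₁ κ ⟶ pushout f₁ (κ ≫ pushout.inr f₁' κ') :=
      pushout.desc (pushout.inl _ _) (pushout.inr _ _ ≫ pushout.inr _ _)
      (by rw [pushout.condition, Category.assoc])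
    have hm : IsPushout (pushout.inr f₁ κ) (pushout.inr f₁' κ') m (pushout.inr _ _) :=
      (IsPushout.of_left
        (by simpa [m] using (IsPushout.of_hasPushout f₁ (κ ≫ pushout.inr f₁' κ')).flip)
        (by simp [m]) (IsPushout.of_hasPushout f₁ κ).flip).flip
    have := cofibration_of_isPushout ((IsPushout.of_hasPushout f₁' κ').flip.paste_horiz hm)
    have e : pushout.desc ι F w = m ≫ h.i := by ext <;> simp [ι, F, m]
    have : WeakEquivalence (pushout.desc ι F w) :=
      weakEquivalence_of_precomp_of_fac (pushout.inl_desc ι F w)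
    exact ⟨e ▸ inferInstance, this⟩

lemma exists_compatible_factorization_of_isCofibrant {X' X T' T CX : C}
    (f₂' : X' ⟶ T') (f₂ : X ⟶ T) (vX : X' ⟶ X) (vT : T' ⟶ T) (sq₂ : f₂' ≫ vT = vX ≫ f₂)
    (i : X' ⨿ X ⟶ CX) (p : CX ⟶ X) (hip : i ≫ p = coprod.desc vX (𝟙 X))
    [Cofibration i] [IsCofibrant T'] [IsCofibrant T] [WeakEquivalence vT] :
    ∃ (CT : C) (μ' : T' ⟶ CT) (μ : T ⟶ CT) (G : CX ⟶ CT) (pT : CT ⟶ T),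
      f₂' ≫ μ' = (coprod.inl ≫ i) ≫ G ∧ f₂ ≫ μ = (coprod.inr ≫ i) ≫ G ∧
      μ' ≫ pT = vT ∧ μ ≫ pT = 𝟙 T ∧ G ≫ pT = p ≫ f₂ ∧
      (Cofibration μ' ∧ WeakEquivalence μ') ∧ (Cofibration μ ∧ WeakEquivalence μ) := by
  let h := factorizationData (cofibrations C) (trivialFibrations C) (coprod.desc vT (𝟙 T))
  have : Cofibration h.i := (cofibration_iff _).2 h.hi
  obtain ⟨_, _⟩ := (mem_trivialFibrations_iff _).1 h.hp
  have hfac := h.fac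
  have sq : CommSq (coprod.map f₂' f₂ ≫ h.i) i h.p (p ≫ f₂) :=
    ⟨by ext <;> simp [hfac, reassoc_of% hip, sq₂]⟩
  have hμ' : (coprod.inl ≫ h.i) ≫ h.p = vT := by simp [hfac]
  have hμ : (coprod.inr ≫ h.i) ≫ h.p = 𝟙 T := by simp [hfac]
  refine ⟨h.Z, coprod.inl ≫ h.i, coprod.inr ≫ h.i, sq.lift, h.p, by simp, by simp, hμ', hμ,
    sq.fac_right, ⟨inferInstance, weakEquivalence_of_postcomp_of_fac hμ'⟩,
    ⟨inferInstance, weakEquivalence_of_postcomp_of_fac hμ⟩⟩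

theorem weakEquivalence_pushout_map {X' Y' T' X Y T : C}
    (f₁' : X' ⟶ Y') (f₂' : X' ⟶ T') (f₁ : X ⟶ Y) (f₂ : X ⟶ T)
    (vX : X' ⟶ X) (vY : Y' ⟶ Y) (vT : T' ⟶ T)
    (sq₁ : f₁' ≫ vY = vX ≫ f₁) (sq₂ : f₂' ≫ vT = vX ≫ f₂)
    [IsCofibrant X'] [IsCofibrant X] [IsCofibrant T'] [IsCofibrant T]
    [Cofibration f₁'] [Cofibration f₁]
    [WeakEquivalence vX] [WeakEquivalence vY] [WeakEquivalence vT] :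
    WeakEquivalence (pushout.map f₁' f₂' f₁ f₂ vY vT vX sq₁ sq₂) := by
  let h := factorizationData (cofibrations C) (trivialFibrations C) (coprod.desc vX (𝟙 X))
  have : Cofibration h.i := (cofibration_iff _).2 h.hi
  have : WeakEquivalence h.p := ((mem_trivialFibrations_iff _).1 h.hp).2
  have hfac := h.fac
  have hκ' : (coprod.inl ≫ h.i) ≫ h.p = vX := by simp [hfac]
  have hκ : (coprod.inr ≫ h.i) ≫ h.p = 𝟙 X := by simp [hfac]
  have := weakEquivalence_of_postcomp_of_fac hκ'
  have := weakEquivalence_of_postcomp_of_fac hκ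
  obtain ⟨CY, ι', ι, F, pY, w₁', w₁, hι', hι, hF, ⟨_, _⟩, ⟨_, _⟩⟩ :=
    exists_compatible_factorization_of_cofibrations f₁' f₁ vX vY sq₁ _ _ h.p hκ' hκ
  obtain ⟨CT, μ', μ, G, pT, w₂', w₂, hμ', hμ, hG, ⟨_, _⟩, ⟨_, _⟩⟩ :=
    exists_compatible_factorization_of_isCofibrant f₂' f₂ vX vT sq₂ h.i h.p hfac
  have := weakEquivalence_pushout_map_of_trivialCofibrations f₁' f₂' F G _ ι' μ' w₁' w₂'
  have := weakEquivalence_pushout_map_of_trivialCofibrations f₁ f₂ F G _ ι μ w₁ w₂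
  let π := pushout.map F G f₁ f₂ pY pT h.p hF hG
  have hretract : pushout.map f₁ f₂ F G ι μ _ w₁ w₂ ≫ π = 𝟙 _ := by
    ext <;> simp [π, reassoc_of% hι, reassoc_of% hμ]
  have := weakEquivalence_of_precomp_of_fac hretract
  have hfactor : pushout.map f₁' f₂' F G ι' μ' _ w₁' w₂' ≫ π =
      pushout.map f₁' f₂' f₁ f₂ vY vT vX sq₁ sq₂ := by
    ext <;> simp [π, reassoc_of% hι', reassoc_of% hμ']
  rw [← hfactor]
  infer_instance

end

lemma ModelStructure.we_pushout_map (D : ModelStructure M) {X' Y' T' X Y T : M}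
    (f₁' : X' ⟶ Y') (f₂' : X' ⟶ T') (f₁ : X ⟶ Y) (f₂ : X ⟶ T)
    (vX : X' ⟶ X) (vY : Y' ⟶ Y) (vT : T' ⟶ T)
    (sq₁ : f₁' ≫ vY = vX ≫ f₁) (sq₂ : f₂' ≫ vT = vX ≫ f₂)
    (hX' : Cofibrant D X') (hX : Cofibrant D X) (hT' : Cofibrant D T') (hT : Cofibrant D T)
    (hf₁' : D.cof f₁') (hf₁ : D.cof f₁) (hvX : D.we vX) (hvY : D.we vY) (hvT : D.we vT) :
    D.we (pushout.map f₁' f₂' f₁ f₂ vY vT vX sq₁ sq₂) := by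
  let _ := D.toModelCategory
  have : IsCofibrant X' := ⟨hX'⟩
  have : IsCofibrant X := ⟨hX⟩
  have : IsCofibrant T' := ⟨hT'⟩
  have : IsCofibrant T := ⟨hT⟩
  have : Cofibration f₁' := ⟨hf₁'⟩
  have : Cofibration f₁ := ⟨hf₁⟩
  have : WeakEquivalence vX := ⟨hvX⟩
  have : WeakEquivalence vY := ⟨hvY⟩
  have : WeakEquivalence vT := ⟨hvT⟩
  exact (weakEquivalence_pushout_map f₁' f₂' f₁ f₂ vX vY vT sq₁ sq₂).mem

/-- **generalized patching lemma of Reedy.** Let `M` be a model category.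
Consider a commutative cube whose top face (with vertices `X', Y', T', Z'`) and bottom
face (with vertices `X, Y, T, Z`) are homotopical cell attachments.  If the three
vertical maps `X' ⟶ X`, `Y' ⟶ Y` and `T' ⟶ T` are weak equivalences, then so is the
fourth vertical map `Z' ⟶ Z`, and it is a weak equivalence between cofibrant objects. -/
theorem generalized_reedy_patching (D : ModelStructure M)
    {X' Y' T' Z' X Y T Z : M}
    (f₁' : X' ⟶ Y') (f₂' : X' ⟶ T') (g₁' : Y' ⟶ Z') (g₂' : T' ⟶ Z')
    (w' : f₁' ≫ g₁' = f₂' ≫ g₂')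
    (f₁ : X ⟶ Y) (f₂ : X ⟶ T) (g₁ : Y ⟶ Z) (g₂ : T ⟶ Z)
    (w : f₁ ≫ g₁ = f₂ ≫ g₂)
    (vX : X' ⟶ X) (vY : Y' ⟶ Y) (vT : T' ⟶ T) (vZ : Z' ⟶ Z)
    (sq₁ : f₁' ≫ vY = vX ≫ f₁) (sq₂ : f₂' ≫ vT = vX ≫ f₂)
    (sq₃ : g₁' ≫ vZ = vY ≫ g₁) (sq₄ : g₂' ≫ vZ = vT ≫ g₂)
    (htop : IsHomotopicalCellAttachment D f₁' f₂' g₁' g₂' w')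
    (hbot : IsHomotopicalCellAttachment D f₁ f₂ g₁ g₂ w)
    (hvX : D.we vX) (hvY : D.we vY) (hvT : D.we vT) :
    D.we vZ ∧ Cofibrant D Z' ∧ Cofibrant D Z := by
  obtain ⟨hX', -, hT', hZ', hf₁', -, hg'⟩ := htop
  obtain ⟨hX, -, hT, hZ, hf₁, -, hg⟩ := hbot
  have hcube : pushout.map f₁' f₂' f₁ f₂ vY vT vX sq₁ sq₂ ≫ pushout.desc g₁ g₂ w =
      pushout.desc g₁' g₂' w' ≫ vZ := by
    ext <;> simp [sq₃, sq₄]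
  have hmap :=
    D.we_pushout_map f₁' f₂' f₁ f₂ vX vY vT sq₁ sq₂ hX' hX hT' hT hf₁' hf₁ hvX hvY hvT
  refine ⟨D.we_of_comp_left _ _ hg' ?_, hZ', hZ⟩
  rw [← hcube]
  exact D.we_comp _ _ hmap hg

end PaperMorita
end
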